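/- arXiv:2208.00624 — 4 statements merged into one kernel-verified Lean document; each statement's English description precedes it below -/
import Mathlib

section
/- With g_τ as above, define h_τ(t) := ∫₀ᵗ (g_τ(s)² − 1) ds. Then the sup-norm bound ‖h_τ(σ·)‖_{L^∞(0,T)} ≤ 1 holds (after suitable normalization of g), i.e., the antiderivative of g_τ² − 1 stays uniformly bounded by 1 independently of τ and σ. -/
/-!
The integrand `g_τ² - 1` is `T/τ`-periodic with zero mean, so its antiderivative `h_τ` is
`T/τ`-periodic and it suffices to bound it on one period `[0, T/τ]`. There
`h_τ(x) = ∫₀ˣ g_τ² - x` is a difference of two numbers in `[0, T/τ]`, since `g_τ² ≥ 0`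
has integral `T/τ` over the whole period; hence `|h_τ| ≤ T/τ ≤ T ≤ 1`, whatever `σ`.
-/

open MeasureTheory

namespace Function.Periodic

theorem periodic_intervalIntegral_of_integral_eq_zero {E : Type*} [NormedAddCommGroup E]
    [NormedSpace ℝ E] {f : ℝ → E} {P : ℝ} (hf : Periodic f P)
    (h_int : ∀ a b, IntervalIntegrable f volume a b) (h_zero : ∫ x in 0..P, f x = 0) :
    Periodic (fun t => ∫ x in 0..t, f x) P := by
  intro t
  simp only [hf.intervalIntegral_add_eq_add 0 t h_int, zero_add, h_zero, add_zero]

end Function.Periodic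

theorem abs_integral_sub_one_le_of_nonneg {f : ℝ → ℝ} {P x : ℝ} (hf_nonneg : 0 ≤ f)
    (hf_int : IntervalIntegrable f volume 0 P) (hf_mean : ∫ s in 0..P, f s = P)
    (hx : x ∈ Set.Icc 0 P) :
    |∫ s in 0..x, (f s - 1)| ≤ P := by
  have h_int_x : IntervalIntegrable f volume 0 x :=
    hf_int.mono_set (Set.uIcc_subset_uIcc_left (Set.mem_uIcc_of_le hx.1 hx.2))
  have h_lower : 0 ≤ ∫ s in 0..x, f s :=
    intervalIntegral.integral_nonneg hx.1 fun s _ => hf_nonneg s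
  have h_upper : ∫ s in 0..x, f s ≤ P :=
    hf_mean ▸ intervalIntegral.integral_mono_interval le_rfl hx.1 hx.2
      (Filter.Eventually.of_forall hf_nonneg) hf_int
  rw [intervalIntegral.integral_sub h_int_x intervalIntegrable_const,
    intervalIntegral.integral_const, smul_eq_mul, mul_one, sub_zero, abs_le]
  constructor <;> linarith [hx.1, hx.2]

theorem abs_integral_sub_one_le_of_periodic {f : ℝ → ℝ} {P : ℝ} (hP : 0 < P)
    (hf : Function.Periodic f P) (hf_nonneg : 0 ≤ f)
    (hf_int : ∀ a b, IntervalIntegrable f volume a b) (hf_mean : ∫ s in 0..P, f s = P)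
    (t : ℝ) :
    |∫ s in 0..t, (f s - 1)| ≤ P := by
  have h_zero : ∫ s in 0..P, (f s - 1) = 0 := by
    rw [intervalIntegral.integral_sub (hf_int 0 P) intervalIntegrable_const, hf_mean]
    simp
  have h_per : Function.Periodic (fun t => ∫ s in 0..t, (f s - 1)) P :=
    Function.Periodic.periodic_intervalIntegral_of_integral_eq_zero (fun s => by simp only [hf s])
      (fun a b => (hf_int a b).sub intervalIntegrable_const) h_zero
  obtain ⟨x, hx, h_eq⟩ := h_per.exists_mem_Ico₀ hP t
  rw [h_eq]
  exact abs_integral_sub_one_le_of_nonneg hf_nonneg (hf_int 0 P) hf_mean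
    (Set.Ico_subset_Icc_self hx)

/-- The antiderivative `h_τ(t) = ∫₀ᵗ (g_τ(s)² - 1) ds` of the temporal oscillation
`g_τ² - 1` (with `g_τ` the `T/τ`-periodic rescaled profile of mean square one) stays
uniformly bounded: `‖h_τ(σ·)‖_{L^∞(0,T)} ≤ 1`, independently of `τ` and `σ`
(after the normalization `T ≤ 1` of the period). -/
theorem stmt1 (T : ℝ) (hT : 0 < T) (hT1 : T ≤ 1) (τ σ : ℕ+) (gper : ℝ → ℝ)
    (hcont : Continuous gper)
    (hper : Function.Periodic gper (T / ((τ : ℕ) : ℝ)))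
    (hms : ∫ t in (0:ℝ)..(T / ((τ : ℕ) : ℝ)), (gper t) ^ 2 = T / ((τ : ℕ) : ℝ))
    (h : ℝ → ℝ) (hdef : ∀ t, h t = ∫ s in (0:ℝ)..t, ((gper s) ^ 2 - 1)) :
    ∀ t ∈ Set.Icc (0:ℝ) T, |h (((σ : ℕ) : ℝ) * t)| ≤ 1 := by
  intro t _
  have hτ : (1 : ℝ) ≤ ((τ : ℕ) : ℝ) := by exact_mod_cast τ.pos
  have h_period_pos : 0 < T / ((τ : ℕ) : ℝ) := div_pos hT (zero_lt_one.trans_le hτ)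
  have h_bound := abs_integral_sub_one_le_of_periodic h_period_pos
    (fun s => by simp only [hper s]) (fun s => sq_nonneg (gper s))
    (fun a b => (hcont.pow 2).intervalIntegrable a b) hms (((σ : ℕ) : ℝ) * t)
  rw [hdef]
  exact h_bound.trans ((div_le_self hT.le hτ).trans hT1)
end

section
/- There exist a finite set Λ_u ⊂ S² ∩ ℚ³ of unit rational vectors k with associated orthonormal bases (k, k₁, k₂), a radius ε_u > 0, and smooth positive functions γ_{(k)} : B_{ε_u}(Id) → ℝ defined on the ε_u-ball around the identity in the space of 3×3 symmetric matrices, such that every symmetric S with |S − Id| < ε_u admits the decomposition S = ∑_{k ∈ Λ_u} γ_{(k)}(S)² k₁ ⊗ k₁. -/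
/-- The Frobenius norm of a `3×3` real matrix. -/
noncomputable def frob3 (A : Matrix (Fin 3) (Fin 3) ℝ) : ℝ :=
  Real.sqrt (∑ i, ∑ j, (A i j) ^ 2)

namespace Stmt7Aux

noncomputable section

def K1 : Fin 3 → ℝ := ![1, 0, 0]
def K2 : Fin 3 → ℝ := ![0, 4/5, -3/5]
def K3 : Fin 3 → ℝ := ![0, 0, 1]
def K4 : Fin 3 → ℝ := ![4/5, -3/5, 0]
def K5 : Fin 3 → ℝ := ![0, 1, 0]
def K6 : Fin 3 → ℝ := ![3/5, 0, -4/5]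

def V1 : Fin 3 → ℝ := ![0, 3/5, -4/5]
def V2 : Fin 3 → ℝ := ![0, 3/5, 4/5]
def V3 : Fin 3 → ℝ := ![3/5, -4/5, 0]
def V4 : Fin 3 → ℝ := ![3/5, 4/5, 0]
def V5 : Fin 3 → ℝ := ![4/5, 0, -3/5]
def V6 : Fin 3 → ℝ := ![4/5, 0, 3/5]

def W1 : Fin 3 → ℝ := ![0, 4/5, 3/5]
def W2 : Fin 3 → ℝ := ![1, 0, 0]
def W3 : Fin 3 → ℝ := ![4/5, 3/5, 0]
def W4 : Fin 3 → ℝ := ![0, 0, 1]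
def W5 : Fin 3 → ℝ := ![-3/5, 0, -4/5]
def W6 : Fin 3 → ℝ := ![0, -1, 0]

def c1 (S : Matrix (Fin 3) (Fin 3) ℝ) : ℝ :=
  -72/193 * S 0 0 + 81/386 * S 1 1 + 128/193 * S 2 2 - 25/24 * S 1 2
def c2 (S : Matrix (Fin 3) (Fin 3) ℝ) : ℝ :=
  -72/193 * S 0 0 + 81/386 * S 1 1 + 128/193 * S 2 2 + 25/24 * S 1 2
def c3 (S : Matrix (Fin 3) (Fin 3) ℝ) : ℝ :=
  81/386 * S 0 0 + 128/193 * S 1 1 - 72/193 * S 2 2 - 25/24 * S 0 1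
def c4 (S : Matrix (Fin 3) (Fin 3) ℝ) : ℝ :=
  81/386 * S 0 0 + 128/193 * S 1 1 - 72/193 * S 2 2 + 25/24 * S 0 1
def c5 (S : Matrix (Fin 3) (Fin 3) ℝ) : ℝ :=
  128/193 * S 0 0 - 72/193 * S 1 1 + 81/386 * S 2 2 - 25/24 * S 0 2
def c6 (S : Matrix (Fin 3) (Fin 3) ℝ) : ℝ :=
  128/193 * S 0 0 - 72/193 * S 1 1 + 81/386 * S 2 2 + 25/24 * S 0 2

def k1f : (Fin 3 → ℝ) → Fin 3 → ℝ := fun k =>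
  if k = K1 then V1 else if k = K2 then V2 else if k = K3 then V3
  else if k = K4 then V4 else if k = K5 then V5 else V6

def k2f : (Fin 3 → ℝ) → Fin 3 → ℝ := fun k =>
  if k = K1 then W1 else if k = K2 then W2 else if k = K3 then W3
  else if k = K4 then W4 else if k = K5 then W5 else W6

def cf : (Fin 3 → ℝ) → Matrix (Fin 3) (Fin 3) ℝ → ℝ := fun k S =>
  if k = K1 then c1 S else if k = K2 then c2 S else if k = K3 then c3 S
  else if k = K4 then c4 S else if k = K5 then c5 S else c6 S

def gf : (Fin 3 → ℝ) → Matrix (Fin 3) (Fin 3) ℝ → ℝ := fun k S => Real.sqrt (cf k S)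

-- disequalities
lemma ne12 : K2 ≠ K1 := by intro h; have := congrFun h 0; norm_num [K1, K2] at this
lemma ne13 : K3 ≠ K1 := by intro h; have := congrFun h 0; norm_num [K1, K3] at this
lemma ne14 : K4 ≠ K1 := by intro h; have := congrFun h 0; norm_num [K1, K4] at this
lemma ne15 : K5 ≠ K1 := by intro h; have := congrFun h 0; norm_num [K1, K5] at this
lemma ne16 : K6 ≠ K1 := by intro h; have := congrFun h 0; norm_num [K1, K6] at this
lemma ne23 : K3 ≠ K2 := by intro h; have := congrFun h 1; norm_num [K2, K3] at this
lemma ne24 : K4 ≠ K2 := by intro h; have := congrFun h 0; norm_num [K2, K4] at this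
lemma ne25 : K5 ≠ K2 := by intro h; have := congrFun h 1; norm_num [K2, K5] at this
lemma ne26 : K6 ≠ K2 := by intro h; have := congrFun h 0; norm_num [K2, K6] at this
lemma ne34 : K4 ≠ K3 := by intro h; have := congrFun h 0; norm_num [K3, K4] at this
lemma ne35 : K5 ≠ K3 := by intro h; have := congrFun h 1; norm_num [K3, K5] at this
lemma ne36 : K6 ≠ K3 := by intro h; have := congrFun h 0; norm_num [K3, K6] at this
lemma ne45 : K5 ≠ K4 := by intro h; have := congrFun h 0; norm_num [K4, K5] at this
lemma ne46 : K6 ≠ K4 := by intro h; have := congrFun h 0; norm_num [K4, K6] at this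
lemma ne56 : K6 ≠ K5 := by intro h; have := congrFun h 0; norm_num [K5, K6] at this

lemma k1f_1 : k1f K1 = V1 := by simp [k1f]
lemma k1f_2 : k1f K2 = V2 := by simp [k1f, ne12]
lemma k1f_3 : k1f K3 = V3 := by simp [k1f, ne13, ne23]
lemma k1f_4 : k1f K4 = V4 := by simp [k1f, ne14, ne24, ne34]
lemma k1f_5 : k1f K5 = V5 := by simp [k1f, ne15, ne25, ne35, ne45]
lemma k1f_6 : k1f K6 = V6 := by simp [k1f, ne16, ne26, ne36, ne46, ne56]

lemma k2f_1 : k2f K1 = W1 := by simp [k2f]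
lemma k2f_2 : k2f K2 = W2 := by simp [k2f, ne12]
lemma k2f_3 : k2f K3 = W3 := by simp [k2f, ne13, ne23]
lemma k2f_4 : k2f K4 = W4 := by simp [k2f, ne14, ne24, ne34]
lemma k2f_5 : k2f K5 = W5 := by simp [k2f, ne15, ne25, ne35, ne45]
lemma k2f_6 : k2f K6 = W6 := by simp [k2f, ne16, ne26, ne36, ne46, ne56]

lemma cf_1 (S) : cf K1 S = c1 S := by simp [cf]
lemma cf_2 (S) : cf K2 S = c2 S := by simp [cf, ne12]
lemma cf_3 (S) : cf K3 S = c3 S := by simp [cf, ne13, ne23]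
lemma cf_4 (S) : cf K4 S = c4 S := by simp [cf, ne14, ne24, ne34]
lemma cf_5 (S) : cf K5 S = c5 S := by simp [cf, ne15, ne25, ne35, ne45]
lemma cf_6 (S) : cf K6 S = c6 S := by simp [cf, ne16, ne26, ne36, ne46, ne56]

lemma fin3_mk0 (h : 0 < 3) : (⟨0, h⟩ : Fin 3) = 0 := rfl
lemma fin3_mk1 (h : 1 < 3) : (⟨1, h⟩ : Fin 3) = 1 := rfl
lemma fin3_mk2 (h : 2 < 3) : (⟨2, h⟩ : Fin 3) = 2 := rfl

lemma abs_entry_le_frob3 (A : Matrix (Fin 3) (Fin 3) ℝ) (i j : Fin 3) :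
    |A i j| ≤ frob3 A := by
  rw [frob3, ← Real.sqrt_sq_eq_abs]
  apply Real.sqrt_le_sqrt
  calc A i j ^ 2 ≤ ∑ j', A i j' ^ 2 :=
        Finset.single_le_sum (f := fun j' => A i j' ^ 2)
          (fun _ _ => sq_nonneg _) (Finset.mem_univ j)
    _ ≤ ∑ i', ∑ j', A i' j' ^ 2 :=
        Finset.single_le_sum (f := fun i' => ∑ j', A i' j' ^ 2)
          (fun _ _ => Finset.sum_nonneg fun _ _ => sq_nonneg _) (Finset.mem_univ i)

lemma entry_bounds (S : Matrix (Fin 3) (Fin 3) ℝ) (h : frob3 (S - 1) < 5⁻¹) :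
    |S 0 0 - 1| < 5⁻¹ ∧ |S 1 1 - 1| < 5⁻¹ ∧ |S 2 2 - 1| < 5⁻¹ ∧
    |S 0 1| < 5⁻¹ ∧ |S 0 2| < 5⁻¹ ∧ |S 1 2| < 5⁻¹ := by
  have b : ∀ i j, |(S - 1) i j| < 5⁻¹ := fun i j =>
    (abs_entry_le_frob3 (S - 1) i j).trans_lt h
  have e : ∀ i j, (S - 1) i j = S i j - (1 : Matrix (Fin 3) (Fin 3) ℝ) i j := fun i j => rfl
  refine ⟨?_, ?_, ?_, ?_, ?_, ?_⟩
  · have := b 0 0; rwa [e, Matrix.one_apply_eq] at this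
  · have := b 1 1; rwa [e, Matrix.one_apply_eq] at this
  · have := b 2 2; rwa [e, Matrix.one_apply_eq] at this
  · have := b 0 1; rwa [e, Matrix.one_apply_ne (by decide), sub_zero] at this
  · have := b 0 2; rwa [e, Matrix.one_apply_ne (by decide), sub_zero] at this
  · have := b 1 2; rwa [e, Matrix.one_apply_ne (by decide), sub_zero] at this

lemma cpos (S : Matrix (Fin 3) (Fin 3) ℝ) (h : frob3 (S - 1) < 5⁻¹) :
    0 < c1 S ∧ 0 < c2 S ∧ 0 < c3 S ∧ 0 < c4 S ∧ 0 < c5 S ∧ 0 < c6 S := by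
  obtain ⟨h00, h11, h22, h01, h02, h12⟩ := entry_bounds S h
  rw [abs_lt] at h00 h11 h22 h01 h02 h12
  unfold c1 c2 c3 c4 c5 c6
  refine ⟨by linarith, by linarith, by linarith, by linarith, by linarith, by linarith⟩

end

end Stmt7Aux

open Stmt7Aux in
set_option maxHeartbeats 2000000 in
/-- First Geometric Lemma: there exist a finite set `Λ_u ⊆ S² ∩ ℚ³` of unit rational
vectors `k` with associated orthonormal bases `(k, k₁ k, k₂ k)`, a radius `ε_u > 0` and
smooth positive functions `γ_{(k)}` on the `ε_u`-ball around the identity in the symmetric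
`3×3` matrices, such that every symmetric `S` with `|S - Id| < ε_u` decomposes as
`S = ∑_{k ∈ Λ_u} γ_{(k)}(S)² k₁ ⊗ k₁`. -/
theorem stmt7 :
    ∃ (Λ : Finset (Fin 3 → ℝ)) (k₁ k₂ : (Fin 3 → ℝ) → Fin 3 → ℝ) (ε : ℝ)
      (γ : (Fin 3 → ℝ) → Matrix (Fin 3) (Fin 3) ℝ → ℝ),
      0 < ε ∧ Λ.Nonempty ∧
      (∀ k ∈ Λ, (∀ i, ∃ q : ℚ, k i = (q : ℝ)) ∧
        (∑ i, k i ^ 2 = 1) ∧ (∑ i, k₁ k i ^ 2 = 1) ∧ (∑ i, k₂ k i ^ 2 = 1) ∧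
        (∑ i, k i * k₁ k i = 0) ∧ (∑ i, k i * k₂ k i = 0) ∧
        (∑ i, k₁ k i * k₂ k i = 0)) ∧
      (∀ k ∈ Λ, ContDiffOn ℝ (⊤ : ℕ∞) (fun m : Fin 3 → Fin 3 → ℝ => γ k (Matrix.of m))
        {m : Fin 3 → Fin 3 → ℝ | frob3 (Matrix.of m - 1) < ε}) ∧
      (∀ k ∈ Λ, ∀ S : Matrix (Fin 3) (Fin 3) ℝ, frob3 (S - 1) < ε → 0 < γ k S) ∧
      (∀ S : Matrix (Fin 3) (Fin 3) ℝ, S.IsSymm → frob3 (S - 1) < ε →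
        S = ∑ k ∈ Λ, (γ k S) ^ 2 • Matrix.vecMulVec (k₁ k) (k₁ k)) := by
  classical
  refine ⟨{K1, K2, K3, K4, K5, K6}, k1f, k2f, 5⁻¹, gf, by norm_num, ⟨K1, by simp⟩, ?_, ?_, ?_, ?_⟩
  · intro k hk
    simp only [Finset.mem_insert, Finset.mem_singleton] at hk
    have rat : ∀ (x : Fin 3 → ℝ), (∀ i, ∃ q : ℚ, x i = (q : ℝ)) ∨ True := fun _ => Or.inr trivial
    rcases hk with rfl | rfl | rfl | rfl | rfl | rfl
    · refine ⟨?_, ?_, ?_, ?_, ?_, ?_, ?_⟩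
      · intro i; fin_cases i
        · exact ⟨1, by norm_num [K1]⟩
        · exact ⟨0, by norm_num [K1]⟩
        · exact ⟨0, by norm_num [K1]⟩
      · norm_num [Fin.sum_univ_three, Matrix.cons_val_two, Matrix.tail_cons, Matrix.head_cons, K1]
      · rw [k1f_1]; norm_num [Fin.sum_univ_three, Matrix.cons_val_two, Matrix.tail_cons, Matrix.head_cons, V1]
      · rw [k2f_1]; norm_num [Fin.sum_univ_three, Matrix.cons_val_two, Matrix.tail_cons, Matrix.head_cons, W1]
      · rw [k1f_1]; norm_num [Fin.sum_univ_three, Matrix.cons_val_two, Matrix.tail_cons, Matrix.head_cons, K1, V1]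
      · rw [k2f_1]; norm_num [Fin.sum_univ_three, Matrix.cons_val_two, Matrix.tail_cons, Matrix.head_cons, K1, W1]
      · rw [k1f_1, k2f_1]; norm_num [Fin.sum_univ_three, Matrix.cons_val_two, Matrix.tail_cons, Matrix.head_cons, V1, W1]
    · refine ⟨?_, ?_, ?_, ?_, ?_, ?_, ?_⟩
      · intro i; fin_cases i
        · exact ⟨0, by norm_num [K2]⟩
        · exact ⟨4/5, by norm_num [K2]⟩
        · exact ⟨-3/5, by norm_num [K2]⟩
      · norm_num [Fin.sum_univ_three, Matrix.cons_val_two, Matrix.tail_cons, Matrix.head_cons, K2]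
      · rw [k1f_2]; norm_num [Fin.sum_univ_three, Matrix.cons_val_two, Matrix.tail_cons, Matrix.head_cons, V2]
      · rw [k2f_2]; norm_num [Fin.sum_univ_three, Matrix.cons_val_two, Matrix.tail_cons, Matrix.head_cons, W2]
      · rw [k1f_2]; norm_num [Fin.sum_univ_three, Matrix.cons_val_two, Matrix.tail_cons, Matrix.head_cons, K2, V2]
      · rw [k2f_2]; norm_num [Fin.sum_univ_three, Matrix.cons_val_two, Matrix.tail_cons, Matrix.head_cons, K2, W2]
      · rw [k1f_2, k2f_2]; norm_num [Fin.sum_univ_three, Matrix.cons_val_two, Matrix.tail_cons, Matrix.head_cons, V2, W2]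
    · refine ⟨?_, ?_, ?_, ?_, ?_, ?_, ?_⟩
      · intro i; fin_cases i
        · exact ⟨0, by norm_num [K3]⟩
        · exact ⟨0, by norm_num [K3]⟩
        · exact ⟨1, by norm_num [K3]⟩
      · norm_num [Fin.sum_univ_three, Matrix.cons_val_two, Matrix.tail_cons, Matrix.head_cons, K3]
      · rw [k1f_3]; norm_num [Fin.sum_univ_three, Matrix.cons_val_two, Matrix.tail_cons, Matrix.head_cons, V3]
      · rw [k2f_3]; norm_num [Fin.sum_univ_three, Matrix.cons_val_two, Matrix.tail_cons, Matrix.head_cons, W3]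
      · rw [k1f_3]; norm_num [Fin.sum_univ_three, Matrix.cons_val_two, Matrix.tail_cons, Matrix.head_cons, K3, V3]
      · rw [k2f_3]; norm_num [Fin.sum_univ_three, Matrix.cons_val_two, Matrix.tail_cons, Matrix.head_cons, K3, W3]
      · rw [k1f_3, k2f_3]; norm_num [Fin.sum_univ_three, Matrix.cons_val_two, Matrix.tail_cons, Matrix.head_cons, V3, W3]
    · refine ⟨?_, ?_, ?_, ?_, ?_, ?_, ?_⟩
      · intro i; fin_cases i
        · exact ⟨4/5, by norm_num [K4]⟩
        · exact ⟨-3/5, by norm_num [K4]⟩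
        · exact ⟨0, by norm_num [K4]⟩
      · norm_num [Fin.sum_univ_three, Matrix.cons_val_two, Matrix.tail_cons, Matrix.head_cons, K4]
      · rw [k1f_4]; norm_num [Fin.sum_univ_three, Matrix.cons_val_two, Matrix.tail_cons, Matrix.head_cons, V4]
      · rw [k2f_4]; norm_num [Fin.sum_univ_three, Matrix.cons_val_two, Matrix.tail_cons, Matrix.head_cons, W4]
      · rw [k1f_4]; norm_num [Fin.sum_univ_three, Matrix.cons_val_two, Matrix.tail_cons, Matrix.head_cons, K4, V4]
      · rw [k2f_4]; norm_num [Fin.sum_univ_three, Matrix.cons_val_two, Matrix.tail_cons, Matrix.head_cons, K4, W4]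
      · rw [k1f_4, k2f_4]; norm_num [Fin.sum_univ_three, Matrix.cons_val_two, Matrix.tail_cons, Matrix.head_cons, V4, W4]
    · refine ⟨?_, ?_, ?_, ?_, ?_, ?_, ?_⟩
      · intro i; fin_cases i
        · exact ⟨0, by norm_num [K5]⟩
        · exact ⟨1, by norm_num [K5]⟩
        · exact ⟨0, by norm_num [K5]⟩
      · norm_num [Fin.sum_univ_three, Matrix.cons_val_two, Matrix.tail_cons, Matrix.head_cons, K5]
      · rw [k1f_5]; norm_num [Fin.sum_univ_three, Matrix.cons_val_two, Matrix.tail_cons, Matrix.head_cons, V5]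
      · rw [k2f_5]; norm_num [Fin.sum_univ_three, Matrix.cons_val_two, Matrix.tail_cons, Matrix.head_cons, W5]
      · rw [k1f_5]; norm_num [Fin.sum_univ_three, Matrix.cons_val_two, Matrix.tail_cons, Matrix.head_cons, K5, V5]
      · rw [k2f_5]; norm_num [Fin.sum_univ_three, Matrix.cons_val_two, Matrix.tail_cons, Matrix.head_cons, K5, W5]
      · rw [k1f_5, k2f_5]; norm_num [Fin.sum_univ_three, Matrix.cons_val_two, Matrix.tail_cons, Matrix.head_cons, V5, W5]
    · refine ⟨?_, ?_, ?_, ?_, ?_, ?_, ?_⟩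
      · intro i; fin_cases i
        · exact ⟨3/5, by norm_num [K6]⟩
        · exact ⟨0, by norm_num [K6]⟩
        · exact ⟨-4/5, by norm_num [K6]⟩
      · norm_num [Fin.sum_univ_three, Matrix.cons_val_two, Matrix.tail_cons, Matrix.head_cons, K6]
      · rw [k1f_6]; norm_num [Fin.sum_univ_three, Matrix.cons_val_two, Matrix.tail_cons, Matrix.head_cons, V6]
      · rw [k2f_6]; norm_num [Fin.sum_univ_three, Matrix.cons_val_two, Matrix.tail_cons, Matrix.head_cons, W6]
      · rw [k1f_6]; norm_num [Fin.sum_univ_three, Matrix.cons_val_two, Matrix.tail_cons, Matrix.head_cons, K6, V6]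
      · rw [k2f_6]; norm_num [Fin.sum_univ_three, Matrix.cons_val_two, Matrix.tail_cons, Matrix.head_cons, K6, W6]
      · rw [k1f_6, k2f_6]; norm_num [Fin.sum_univ_three, Matrix.cons_val_two, Matrix.tail_cons, Matrix.head_cons, V6, W6]
  · intro k hk
    simp only [Finset.mem_insert, Finset.mem_singleton] at hk
    rcases hk with rfl | rfl | rfl | rfl | rfl | rfl
    · simp only [gf, cf_1]
      intro m hm
      apply ContDiffAt.contDiffWithinAt
      apply ContDiffAt.sqrt
      · unfold c1; simp only [Matrix.of_apply]; fun_prop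
      · exact ne_of_gt (cpos _ hm).1
    · simp only [gf, cf_2]
      intro m hm
      apply ContDiffAt.contDiffWithinAt
      apply ContDiffAt.sqrt
      · unfold c2; simp only [Matrix.of_apply]; fun_prop
      · exact ne_of_gt (cpos _ hm).2.1
    · simp only [gf, cf_3]
      intro m hm
      apply ContDiffAt.contDiffWithinAt
      apply ContDiffAt.sqrt
      · unfold c3; simp only [Matrix.of_apply]; fun_prop
      · exact ne_of_gt (cpos _ hm).2.2.1
    · simp only [gf, cf_4]
      intro m hm
      apply ContDiffAt.contDiffWithinAt
      apply ContDiffAt.sqrt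
      · unfold c4; simp only [Matrix.of_apply]; fun_prop
      · exact ne_of_gt (cpos _ hm).2.2.2.1
    · simp only [gf, cf_5]
      intro m hm
      apply ContDiffAt.contDiffWithinAt
      apply ContDiffAt.sqrt
      · unfold c5; simp only [Matrix.of_apply]; fun_prop
      · exact ne_of_gt (cpos _ hm).2.2.2.2.1
    · simp only [gf, cf_6]
      intro m hm
      apply ContDiffAt.contDiffWithinAt
      apply ContDiffAt.sqrt
      · unfold c6; simp only [Matrix.of_apply]; fun_prop
      · exact ne_of_gt (cpos _ hm).2.2.2.2.2
  · intro k hk S hS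
    simp only [Finset.mem_insert, Finset.mem_singleton] at hk
    rcases hk with rfl | rfl | rfl | rfl | rfl | rfl
    · simp only [gf, cf_1]; exact Real.sqrt_pos.mpr (cpos S hS).1
    · simp only [gf, cf_2]; exact Real.sqrt_pos.mpr (cpos S hS).2.1
    · simp only [gf, cf_3]; exact Real.sqrt_pos.mpr (cpos S hS).2.2.1
    · simp only [gf, cf_4]; exact Real.sqrt_pos.mpr (cpos S hS).2.2.2.1
    · simp only [gf, cf_5]; exact Real.sqrt_pos.mpr (cpos S hS).2.2.2.2.1
    · simp only [gf, cf_6]; exact Real.sqrt_pos.mpr (cpos S hS).2.2.2.2.2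
  · intro S hSymm hS
    obtain ⟨p1, p2, p3, p4, p5, p6⟩ := cpos S hS
    rw [Finset.sum_insert (by simp [Ne.symm ne12, Ne.symm ne13, Ne.symm ne14, Ne.symm ne15, Ne.symm ne16]),
        Finset.sum_insert (by simp [Ne.symm ne23, Ne.symm ne24, Ne.symm ne25, Ne.symm ne26]),
        Finset.sum_insert (by simp [Ne.symm ne34, Ne.symm ne35, Ne.symm ne36]),
        Finset.sum_insert (by simp [Ne.symm ne45, Ne.symm ne46]),
        Finset.sum_insert (by simp [Ne.symm ne56]),
        Finset.sum_singleton]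
    simp only [gf, cf_1, cf_2, cf_3, cf_4, cf_5, cf_6,
      k1f_1, k1f_2, k1f_3, k1f_4, k1f_5, k1f_6]
    rw [Real.sq_sqrt p1.le, Real.sq_sqrt p2.le, Real.sq_sqrt p3.le,
        Real.sq_sqrt p4.le, Real.sq_sqrt p5.le, Real.sq_sqrt p6.le]
    ext i j
    fin_cases i <;> fin_cases j <;>
      simp only [Matrix.add_apply, Matrix.smul_apply, Matrix.vecMulVec_apply,
        smul_eq_mul, V1, V2, V3, V4, V5, V6, c1, c2, c3, c4, c5, c6,
        Matrix.cons_val_zero, Matrix.cons_val_one, Matrix.head_cons,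
        Matrix.cons_val_two, Matrix.tail_cons, Fin.isValue,
        fin3_mk0, fin3_mk1, fin3_mk2] <;>
      first
      | ring1
      | exact hSymm.apply 0 1
      | exact hSymm.apply 0 2
      | exact hSymm.apply 1 2
      | linear_combination hSymm.apply 0 1
      | linear_combination hSymm.apply 0 2
      | linear_combination hSymm.apply 1 2
end

section
/- There exist a finite set Λ_B ⊂ S² ∩ ℚ³ of unit rational vectors k with associated orthonormal bases (k, k₁, k₂), a radius ε_B > 0, and smooth positive functions γ_{(k)} : B_{ε_B}(0) → ℝ defined on the ε_B-ball around 0 in the space of 3×3 skew-symmetric matrices, such that every skew-symmetric A with |A| < ε_B admits the decomposition A = ∑_{k ∈ Λ_B} γ_{(k)}(A)² (k₂ ⊗ k₁ − k₁ ⊗ k₂). -/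
noncomputable def ee (i : Fin 3) : Fin 3 → ℝ := fun j => if j = i then 1 else 0

lemma ee_ne {i j : Fin 3} (h : i ≠ j) : ee i ≠ ee j := by
  intro he
  have := congrFun he i
  simp [ee, h] at this

lemma ee_ne_neg (i j : Fin 3) : ee i ≠ -ee j := by
  intro he
  have := congrFun he i
  simp [ee] at this
  split_ifs at this <;> norm_num at this

lemma neg_ee_ne_ee (i j : Fin 3) : -ee i ≠ ee j := fun h => ee_ne_neg j i h.symm

lemma neg_ee_ne {i j : Fin 3} (h : i ≠ j) : -ee i ≠ -ee j :=
  fun h' => ee_ne h (neg_injective h')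

lemma abs_entry_le (A : Matrix (Fin 3) (Fin 3) ℝ) (i j : Fin 3) : |A i j| ≤ frob3 A := by
  have h1 : (A i j) ^ 2 ≤ ∑ a, ∑ b, (A a b) ^ 2 := by
    calc (A i j) ^ 2 ≤ ∑ b, (A i b) ^ 2 :=
          Finset.single_le_sum (f := fun b => (A i b) ^ 2) (fun b _ => sq_nonneg _) (Finset.mem_univ j)
      _ ≤ ∑ a, ∑ b, (A a b) ^ 2 :=
          Finset.single_le_sum (f := fun a => ∑ b, (A a b) ^ 2) (fun a _ => Finset.sum_nonneg fun b _ => sq_nonneg _)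
            (Finset.mem_univ i)
  calc |A i j| = Real.sqrt ((A i j) ^ 2) := (Real.sqrt_sq_eq_abs _).symm
    _ ≤ frob3 A := Real.sqrt_le_sqrt h1

open Classical in
noncomputable def K1 : (Fin 3 → ℝ) → Fin 3 → ℝ := fun k =>
  if k = ee 0 then ee 1 else if k = -ee 0 then ee 2
  else if k = ee 1 then ee 2 else if k = -ee 1 then ee 0
  else if k = ee 2 then ee 0 else ee 1

open Classical in
noncomputable def K2 : (Fin 3 → ℝ) → Fin 3 → ℝ := fun k =>
  if k = ee 0 then ee 2 else if k = -ee 0 then ee 1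
  else if k = ee 1 then ee 0 else if k = -ee 1 then ee 2
  else if k = ee 2 then ee 1 else ee 0

open Classical in
noncomputable def G : (Fin 3 → ℝ) → Matrix (Fin 3) (Fin 3) ℝ → ℝ := fun k A =>
  if k = ee 0 then Real.sqrt (1 + A 2 1 / 2) else if k = -ee 0 then Real.sqrt (1 - A 2 1 / 2)
  else if k = ee 1 then Real.sqrt (1 + A 0 2 / 2) else if k = -ee 1 then Real.sqrt (1 - A 0 2 / 2)
  else if k = ee 2 then Real.sqrt (1 + A 1 0 / 2) else Real.sqrt (1 - A 1 0 / 2)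

section eval
-- distinctness facts as simp lemmas
lemma d1 : (ee 0 : Fin 3 → ℝ) ≠ ee 1 := ee_ne (by decide)
lemma d2 : (ee 0 : Fin 3 → ℝ) ≠ ee 2 := ee_ne (by decide)
lemma d3 : (ee 1 : Fin 3 → ℝ) ≠ ee 0 := ee_ne (by decide)
lemma d4 : (ee 1 : Fin 3 → ℝ) ≠ ee 2 := ee_ne (by decide)
lemma d5 : (ee 2 : Fin 3 → ℝ) ≠ ee 0 := ee_ne (by decide)
lemma d6 : (ee 2 : Fin 3 → ℝ) ≠ ee 1 := ee_ne (by decide)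
lemma n00 : (ee 0 : Fin 3 → ℝ) ≠ -ee 0 := ee_ne_neg 0 0
lemma n01 : (ee 0 : Fin 3 → ℝ) ≠ -ee 1 := ee_ne_neg 0 1
lemma n02 : (ee 0 : Fin 3 → ℝ) ≠ -ee 2 := ee_ne_neg 0 2
lemma n10 : (ee 1 : Fin 3 → ℝ) ≠ -ee 0 := ee_ne_neg 1 0
lemma n11 : (ee 1 : Fin 3 → ℝ) ≠ -ee 1 := ee_ne_neg 1 1
lemma n12 : (ee 1 : Fin 3 → ℝ) ≠ -ee 2 := ee_ne_neg 1 2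
lemma n20 : (ee 2 : Fin 3 → ℝ) ≠ -ee 0 := ee_ne_neg 2 0
lemma n21 : (ee 2 : Fin 3 → ℝ) ≠ -ee 1 := ee_ne_neg 2 1
lemma n22 : (ee 2 : Fin 3 → ℝ) ≠ -ee 2 := ee_ne_neg 2 2
lemma m00 : (-ee 0 : Fin 3 → ℝ) ≠ ee 0 := neg_ee_ne_ee 0 0
lemma m01 : (-ee 0 : Fin 3 → ℝ) ≠ ee 1 := neg_ee_ne_ee 0 1
lemma m02 : (-ee 0 : Fin 3 → ℝ) ≠ ee 2 := neg_ee_ne_ee 0 2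
lemma m10 : (-ee 1 : Fin 3 → ℝ) ≠ ee 0 := neg_ee_ne_ee 1 0
lemma m11 : (-ee 1 : Fin 3 → ℝ) ≠ ee 1 := neg_ee_ne_ee 1 1
lemma m12 : (-ee 1 : Fin 3 → ℝ) ≠ ee 2 := neg_ee_ne_ee 1 2
lemma m20 : (-ee 2 : Fin 3 → ℝ) ≠ ee 0 := neg_ee_ne_ee 2 0
lemma m21 : (-ee 2 : Fin 3 → ℝ) ≠ ee 1 := neg_ee_ne_ee 2 1
lemma m22 : (-ee 2 : Fin 3 → ℝ) ≠ ee 2 := neg_ee_ne_ee 2 2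
lemma p1 : (-ee 0 : Fin 3 → ℝ) ≠ -ee 1 := neg_ee_ne (by decide)
lemma p2 : (-ee 0 : Fin 3 → ℝ) ≠ -ee 2 := neg_ee_ne (by decide)
lemma p3 : (-ee 1 : Fin 3 → ℝ) ≠ -ee 0 := neg_ee_ne (by decide)
lemma p4 : (-ee 1 : Fin 3 → ℝ) ≠ -ee 2 := neg_ee_ne (by decide)
lemma p5 : (-ee 2 : Fin 3 → ℝ) ≠ -ee 0 := neg_ee_ne (by decide)
lemma p6 : (-ee 2 : Fin 3 → ℝ) ≠ -ee 1 := neg_ee_ne (by decide)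

attribute [local simp] d1 d2 d3 d4 d5 d6 n00 n01 n02 n10 n11 n12 n20 n21 n22
  m00 m01 m02 m10 m11 m12 m20 m21 m22 p1 p2 p3 p4 p5 p6

lemma ee_rat (i j : Fin 3) : ∃ q : ℚ, ee i j = (q : ℝ) :=
  ⟨if j = i then 1 else 0, by simp [ee]; split_ifs <;> simp⟩

lemma neg_ee_rat (i j : Fin 3) : ∃ q : ℚ, (-ee i) j = (q : ℝ) :=
  ⟨if j = i then -1 else 0, by simp [ee]; split_ifs <;> simp⟩

lemma aux_pos {m : Matrix (Fin 3) (Fin 3) ℝ} (h : frob3 m < 1) (i j : Fin 3) :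
    0 < 1 + m i j / 2 ∧ 0 < 1 - m i j / 2 := by
  have h2 : |m i j| < 1 := lt_of_le_of_lt (abs_entry_le m i j) h
  have h3 := abs_lt.mp h2
  constructor <;> linarith [h3.1, h3.2]

lemma gSmoothAdd (i j : Fin 3) :
    ContDiffOn ℝ (⊤ : ℕ∞) (fun m : Fin 3 → Fin 3 → ℝ => Real.sqrt (1 + m i j / 2))
      {m : Fin 3 → Fin 3 → ℝ | frob3 (Matrix.of m) < 1} := by
  refine ContDiffOn.sqrt ?_ ?_
  · exact (contDiffOn_const.add (((contDiff_apply_apply ℝ ℝ i j).contDiffOn).div_const 2))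
  · intro m hm
    have := (aux_pos (m := Matrix.of m) hm i j).1
    simp only [Matrix.of_apply] at this
    linarith

lemma gSmoothSub (i j : Fin 3) :
    ContDiffOn ℝ (⊤ : ℕ∞) (fun m : Fin 3 → Fin 3 → ℝ => Real.sqrt (1 - m i j / 2))
      {m : Fin 3 → Fin 3 → ℝ | frob3 (Matrix.of m) < 1} := by
  refine ContDiffOn.sqrt ?_ ?_
  · exact (contDiffOn_const.sub (((contDiff_apply_apply ℝ ℝ i j).contDiffOn).div_const 2))
  · intro m hm
    have := (aux_pos (m := Matrix.of m) hm i j).2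
    simp only [Matrix.of_apply] at this
    linarith

/-- Second Geometric Lemma: there exist a finite set `Λ_B ⊆ S² ∩ ℚ³` of unit rational
vectors `k` with associated orthonormal bases `(k, k₁ k, k₂ k)`, a radius `ε_B > 0` and
smooth positive functions `γ_{(k)}` on the `ε_B`-ball around `0` in the skew-symmetric
`3×3` matrices, such that every skew-symmetric `A` with `|A| < ε_B` decomposes as
`A = ∑_{k ∈ Λ_B} γ_{(k)}(A)² (k₂ ⊗ k₁ - k₁ ⊗ k₂)`. -/
theorem stmt8 :
    ∃ (Λ : Finset (Fin 3 → ℝ)) (k₁ k₂ : (Fin 3 → ℝ) → Fin 3 → ℝ) (ε : ℝ)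
      (γ : (Fin 3 → ℝ) → Matrix (Fin 3) (Fin 3) ℝ → ℝ),
      0 < ε ∧ Λ.Nonempty ∧
      (∀ k ∈ Λ, (∀ i, ∃ q : ℚ, k i = (q : ℝ)) ∧
        (∑ i, k i ^ 2 = 1) ∧ (∑ i, k₁ k i ^ 2 = 1) ∧ (∑ i, k₂ k i ^ 2 = 1) ∧
        (∑ i, k i * k₁ k i = 0) ∧ (∑ i, k i * k₂ k i = 0) ∧
        (∑ i, k₁ k i * k₂ k i = 0)) ∧
      (∀ k ∈ Λ, ContDiffOn ℝ (⊤ : ℕ∞) (fun m : Fin 3 → Fin 3 → ℝ => γ k (Matrix.of m))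
        {m : Fin 3 → Fin 3 → ℝ | frob3 (Matrix.of m) < ε}) ∧
      (∀ k ∈ Λ, ∀ A : Matrix (Fin 3) (Fin 3) ℝ, A.transpose = -A → frob3 A < ε →
        0 < γ k A) ∧
      (∀ A : Matrix (Fin 3) (Fin 3) ℝ, A.transpose = -A → frob3 A < ε →
        A = ∑ k ∈ Λ, (γ k A) ^ 2 •
          (Matrix.vecMulVec (k₂ k) (k₁ k) - Matrix.vecMulVec (k₁ k) (k₂ k))) := by
  classical
  refine ⟨{ee 0, -ee 0, ee 1, -ee 1, ee 2, -ee 2}, K1, K2, 1, G, one_pos,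
    ⟨ee 0, by simp⟩, ?_, ?_, ?_, ?_⟩
  · intro k hk
    simp only [Finset.mem_insert, Finset.mem_singleton] at hk
    rcases hk with rfl | rfl | rfl | rfl | rfl | rfl <;>
      refine ⟨fun i => ?_, ?_, ?_, ?_, ?_, ?_, ?_⟩ <;>
      first
        | exact ee_rat _ i
        | exact neg_ee_rat _ i
        | simp [K1, K2, ee, Fin.sum_univ_three]
  · intro k hk
    simp only [Finset.mem_insert, Finset.mem_singleton] at hk
    rcases hk with rfl | rfl | rfl | rfl | rfl | rfl <;>
      simp only [G, d1, d2, d3, d4, d5, d6, n00, n01, n02, n10, n11, n12,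
        n20, n21, n22, m00, m01, m02, m10, m11, m12, m20, m21, m22, p1, p2, p3, p4, p5, p6,
        if_true, if_false, eq_self_iff_true, ite_true, ite_false, ne_eq,
        not_false_eq_true, Matrix.of_apply] <;>
      first
        | exact gSmoothAdd 2 1
        | exact gSmoothSub 2 1
        | exact gSmoothAdd 0 2
        | exact gSmoothSub 0 2
        | exact gSmoothAdd 1 0
        | exact gSmoothSub 1 0
  · intro k hk A hA hfr
    simp only [Finset.mem_insert, Finset.mem_singleton] at hk
    have h1 := (aux_pos hfr 2 1).1
    have h2 := (aux_pos hfr 2 1).2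
    have h3 := (aux_pos hfr 0 2).1
    have h4 := (aux_pos hfr 0 2).2
    have h5 := (aux_pos hfr 1 0).1
    have h6 := (aux_pos hfr 1 0).2
    rcases hk with rfl | rfl | rfl | rfl | rfl | rfl <;>
      simp only [G, d1, d2, d3, d4, d5, d6, n00, n01, n02, n10, n11, n12,
        n20, n21, n22, m00, m01, m02, m10, m11, m12, m20, m21, m22, p1, p2, p3, p4, p5, p6,
        if_true, if_false, eq_self_iff_true, ite_true, ite_false, ne_eq,
        not_false_eq_true] <;>
      exact Real.sqrt_pos.mpr (by assumption)
  · intro A hA hfr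
    have hs : ∀ i j, A j i = -A i j := fun i j => congrFun (congrFun hA i) j
    have e1 : G (ee 0) A ^ 2 = 1 + A 2 1 / 2 := by
      simp [G]; exact Real.sq_sqrt (le_of_lt (aux_pos hfr 2 1).1)
    have e2 : G (-ee 0) A ^ 2 = 1 - A 2 1 / 2 := by
      simp [G]; exact Real.sq_sqrt (le_of_lt (aux_pos hfr 2 1).2)
    have e3 : G (ee 1) A ^ 2 = 1 + A 0 2 / 2 := by
      simp [G]; exact Real.sq_sqrt (le_of_lt (aux_pos hfr 0 2).1)
    have e4 : G (-ee 1) A ^ 2 = 1 - A 0 2 / 2 := by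
      simp [G]; exact Real.sq_sqrt (le_of_lt (aux_pos hfr 0 2).2)
    have e5 : G (ee 2) A ^ 2 = 1 + A 1 0 / 2 := by
      simp [G]; exact Real.sq_sqrt (le_of_lt (aux_pos hfr 1 0).1)
    have e6 : G (-ee 2) A ^ 2 = 1 - A 1 0 / 2 := by
      simp [G]; exact Real.sq_sqrt (le_of_lt (aux_pos hfr 1 0).2)
    rw [Finset.sum_insert (by simp), Finset.sum_insert (by simp), Finset.sum_insert (by simp),
      Finset.sum_insert (by simp), Finset.sum_insert (by simp), Finset.sum_singleton]
    have k1 : K1 (ee 0) = ee 1 := by simp [K1]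
    have k2 : K1 (-ee 0) = ee 2 := by simp [K1]
    have k3 : K1 (ee 1) = ee 2 := by simp [K1]
    have k4 : K1 (-ee 1) = ee 0 := by simp [K1]
    have k5 : K1 (ee 2) = ee 0 := by simp [K1]
    have k6 : K1 (-ee 2) = ee 1 := by simp [K1]
    have l1 : K2 (ee 0) = ee 2 := by simp [K2]
    have l2 : K2 (-ee 0) = ee 1 := by simp [K2]
    have l3 : K2 (ee 1) = ee 0 := by simp [K2]
    have l4 : K2 (-ee 1) = ee 2 := by simp [K2]
    have l5 : K2 (ee 2) = ee 1 := by simp [K2]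
    have l6 : K2 (-ee 2) = ee 0 := by simp [K2]
    rw [k1, k2, k3, k4, k5, k6, l1, l2, l3, l4, l5, l6, e1, e2, e3, e4, e5, e6]
    ext i j
    have h00 := hs 0 0
    have h11 := hs 1 1
    have h22 := hs 2 2
    have h01 := hs 0 1
    have h02 := hs 0 2
    have h12 := hs 1 2
    fin_cases i <;> fin_cases j <;>
      simp [Matrix.add_apply, Matrix.sub_apply, Matrix.smul_apply, Matrix.vecMulVec_apply,
        ee] <;>
      linarith
end eval
end

section
/- Let φ_{(k)}, φ_{(k')} be two intermittent shear profiles on 𝕋³ oscillating in distinct rational directions k ≠ k' ∈ Λ_u ∪ Λ_B, each concentrated at scale r_⊥ and frequency λ. Then their product satisfies the improved intermittency estimate ‖∇^N(φ_{(k)} φ_{(k')})‖_{C_t L^p(𝕋³)} ≲ λ^N r_⊥^{2/p − 1} for all N ∈ ℕ and p ∈ [1,∞], i.e., the supports intersect on a set whose geometry yields an L^p gain of r_⊥^{2/p−1} rather than r_⊥^{2/p−1} per factor squared. -/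
open MeasureTheory Set Filter Topology ENNReal

private lemma ev_iteratedFDeriv_eq {E F : Type*} [NormedAddCommGroup E] [NormedSpace ℝ E]
    [NormedAddCommGroup F] [NormedSpace ℝ F] (n : ℕ) {f g : E → F} {x : E}
    (h : f =ᶠ[nhds x] g) : iteratedFDeriv ℝ n f x = iteratedFDeriv ℝ n g x := by
  simp only [← iteratedFDerivWithin_univ]
  exact Filter.EventuallyEq.iteratedFDerivWithin_eq
    (by simpa [nhdsWithin_univ] using h) h.self_of_nhds n

private lemma per_vanish (φ φper : ℝ → ℝ) (hsupp : tsupport φ ⊆ Set.Icc (-1) 1)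
    (r : ℝ) (hr0 : 0 < r) (hr1 : r < 1)
    (hper : Function.Periodic φper (2 * Real.pi))
    (hform : ∀ y ∈ Set.Ico (-Real.pi) Real.pi, φper y = (Real.sqrt r)⁻¹ * φ (y / r))
    (n : ℤ) (z : ℝ) (hz1 : 2*Real.pi*n + r < z) (hz2 : z < 2*Real.pi*n + 2*Real.pi - r) :
    φper z = 0 := by
  have hπ : (1:ℝ) < Real.pi := by linarith [Real.pi_gt_three]
  have hzr : φper z = φper (z - n * (2*Real.pi)) := (hper.sub_int_mul_eq n).symm
  set w := z - n * (2*Real.pi) with hw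
  have hw1 : r < w := by simp only [hw]; nlinarith [hz1]
  have hw2 : w < 2*Real.pi - r := by simp only [hw]; nlinarith [hz2]
  rcases lt_or_ge w Real.pi with h | h
  · rw [hzr, hform w ⟨by linarith, h⟩]
    have hz0 : φ (w / r) = 0 := by
      apply image_eq_zero_of_notMem_tsupport
      intro hmem
      have h2 := (hsupp hmem).2
      have : (1:ℝ) < w / r := (one_lt_div hr0).mpr hw1
      linarith
    simp [hz0]
  · have hzr2 : φper z = φper (w - 2*Real.pi) := by rw [hzr, hper.sub_eq w]
    rw [hzr2, hform _ ⟨by linarith, by linarith⟩]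
    have hz0 : φ ((w - 2*Real.pi) / r) = 0 := by
      apply image_eq_zero_of_notMem_tsupport
      intro hmem
      have h1 := (hsupp hmem).1
      have : (w - 2*Real.pi) / r < -1 := by
        rw [div_lt_iff₀ hr0]; linarith
      linarith
    simp [hz0]

private lemma per_deriv_bound (φ φper : ℝ → ℝ) (hφ : ContDiff ℝ (⊤ : ℕ∞) φ)
    (hsupp : tsupport φ ⊆ Set.Icc (-1) 1)
    (r : ℝ) (hr0 : 0 < r) (hr1 : r < 1)
    (hsm : ContDiff ℝ (⊤ : ℕ∞) φper)
    (hper : Function.Periodic φper (2 * Real.pi))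
    (hform : ∀ y ∈ Set.Ico (-Real.pi) Real.pi, φper y = (Real.sqrt r)⁻¹ * φ (y / r))
    (i : ℕ) (M : ℝ) (hM0 : 0 ≤ M) (hMb : ∀ t, |iteratedDeriv i φ t| ≤ M)
    (z : ℝ) : |iteratedDeriv i φper z| ≤ (Real.sqrt r)⁻¹ * r⁻¹ ^ i * M := by
  have hπ : (1:ℝ) < Real.pi := by linarith [Real.pi_gt_three]
  have hsr : (0:ℝ) ≤ (Real.sqrt r)⁻¹ := by positivity
  have hri : (0:ℝ) ≤ r⁻¹ ^ i := by positivity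
  set c := 2 * Real.pi with hc
  have hc0 : (0:ℝ) < c := by simp only [hc]; linarith
  obtain ⟨n, hn1, hn2⟩ : ∃ n : ℤ, -Real.pi ≤ z - n * c ∧ z - n * c < Real.pi := by
    refine ⟨⌊(z + Real.pi) / c⌋, ?_, ?_⟩
    · have h1 : (⌊(z + Real.pi) / c⌋ : ℝ) ≤ (z + Real.pi) / c := Int.floor_le _
      have := (le_div_iff₀ hc0).mp h1
      linarith
    · have h2 : (z + Real.pi) / c < ⌊(z + Real.pi) / c⌋ + 1 := Int.lt_floor_add_one _
      have := (div_lt_iff₀ hc0).mp h2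
      simp only [hc] at *
      nlinarith
  set w := z - n * c with hw
  rcases eq_or_lt_of_le hn1 with heq | hlt
  · -- w = -π : φper vanishes near z
    have hzv : φper =ᶠ[nhds z] fun _ => (0:ℝ) := by
      have hopen : z ∈ Set.Ioo (2*Real.pi*(n-1) + r) (2*Real.pi*(n-1) + 2*Real.pi - r) := by
        have hzeq : z = n * c - Real.pi := by
          have : w = -Real.pi := heq.symm
          simp only [hw] at this; linarith
        constructor <;> (rw [hzeq]; push_cast; simp only [hc]; nlinarith)
      filter_upwards [Ioo_mem_nhds hopen.1 hopen.2] with y hy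
      exact per_vanish φ φper hsupp r hr0 hr1 hper hform (n-1) y (by exact_mod_cast hy.1) (by exact_mod_cast hy.2)
    rw [Filter.EventuallyEq.iteratedDeriv_eq i hzv]
    have : iteratedDeriv i (fun _ : ℝ => (0:ℝ)) z = 0 := by
      simp [iteratedDeriv_eq_iteratedFDeriv, iteratedFDeriv_zero_fun]
    rw [this]
    simp only [abs_zero]
    positivity
  · -- -π < w < π
    set g : ℝ → ℝ := fun u => (Real.sqrt r)⁻¹ * φ (r⁻¹ * u) with hg
    have hev : φper =ᶠ[nhds z] fun y => g (y + -(n * c)) := by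
      have hopen : z ∈ Set.Ioo (n * c - Real.pi) (n * c + Real.pi) := by
        constructor <;> (simp only [hw] at hlt hn2; linarith)
      filter_upwards [Ioo_mem_nhds hopen.1 hopen.2] with y hy
      have h1 : φper y = φper (y - n * c) := (hper.sub_int_mul_eq n).symm
      have h2 : y - n * c ∈ Set.Ico (-Real.pi) Real.pi := ⟨by linarith [hy.1], by linarith [hy.2]⟩
      rw [h1, hform _ h2]
      simp only [hg, div_eq_inv_mul, sub_eq_add_neg]
    rw [Filter.EventuallyEq.iteratedDeriv_eq i hev]
    rw [iteratedDeriv_comp_add_const i g (-(n*c))]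
    have hφi : ContDiff ℝ i φ := hφ.of_le (by exact_mod_cast le_top)
    have hcomp : ContDiff ℝ i (fun v : ℝ => φ (r⁻¹ * v)) :=
      hφi.comp (contDiff_const.mul contDiff_id)
    have hgcalc : iteratedDeriv i g (z + -(n*c)) =
        (Real.sqrt r)⁻¹ * (r⁻¹ ^ i * iteratedDeriv i φ (r⁻¹ * (z + -(n*c)))) := by
      have h1 : iteratedDeriv i (fun u => φ (r⁻¹ * u)) =
          fun x => r⁻¹ ^ i * iteratedDeriv i φ (r⁻¹ * x) := iteratedDeriv_comp_const_mul hφi r⁻¹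
      have hgs : g = (Real.sqrt r)⁻¹ • (fun v : ℝ => φ (r⁻¹ * v)) := by
        funext u; simp [hg, Pi.smul_apply, smul_eq_mul]
      rw [hgs, iteratedDeriv_eq_iteratedFDeriv, iteratedFDeriv_const_smul_apply hcomp.contDiffAt]
      rw [ContinuousMultilinearMap.smul_apply, ← iteratedDeriv_eq_iteratedFDeriv,
        congrFun h1 (z + -(n*c))]
      simp [smul_eq_mul]
    show |iteratedDeriv i g (z + -(n*c))| ≤ _
    rw [hgcalc]
    rw [abs_mul, abs_mul, abs_of_nonneg hsr, abs_of_nonneg hri]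
    rw [mul_assoc]
    gcongr
    exact hMb _

private lemma exists_good_v (k k' : Fin 3 → ℝ) (hk : ∑ i, k i ^ 2 = 1)
    (hind : LinearIndependent ℝ ![k, k']) :
    ∃ v : Fin 3 → ℝ, (Matrix.of ![k, k', v]).det ≠ 0 := by
  set v : Fin 3 → ℝ := ![k 1 * k' 2 - k 2 * k' 1, k 2 * k' 0 - k 0 * k' 2,
    k 0 * k' 1 - k 1 * k' 0] with hv
  refine ⟨v, ?_⟩
  have hdet : (Matrix.of ![k, k', v]).det = v 0 ^ 2 + v 1 ^ 2 + v 2 ^ 2 := by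
    rw [Matrix.det_fin_three]
    simp only [Matrix.of_apply, Matrix.cons_val', Matrix.cons_val_zero, Matrix.cons_val_one,
      Matrix.head_cons, Matrix.empty_val', Matrix.cons_val_fin_one, Matrix.head_fin_const,
      Matrix.cons_val_two, Matrix.tail_cons, hv]
    ring
  rw [hdet]
  have hvne : ¬ (v 0 = 0 ∧ v 1 = 0 ∧ v 2 = 0) := by
    rintro ⟨h0, h1, h2⟩
    simp only [hv, Matrix.cons_val_zero, Matrix.cons_val_one, Matrix.head_cons,
      Matrix.cons_val_two, Matrix.tail_cons] at h0 h1 h2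
    have hksum : k 0 ^ 2 + k 1 ^ 2 + k 2 ^ 2 = 1 := by
      have := hk; rwa [Fin.sum_univ_three] at this
    set s : ℝ := k 0 * k' 0 + k 1 * k' 1 + k 2 * k' 2 with hs
    have e0 : s * k 0 + (-1) * k' 0 = 0 := by
      simp only [hs]; linear_combination k 1 * h2 - k 2 * h1 + k' 0 * hksum
    have e1 : s * k 1 + (-1) * k' 1 = 0 := by
      simp only [hs]; linear_combination k 2 * h0 - k 0 * h2 + k' 1 * hksum
    have e2 : s * k 2 + (-1) * k' 2 = 0 := by
      simp only [hs]; linear_combination k 0 * h1 - k 1 * h0 + k' 2 * hksum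
    have hc : s • k + (-1 : ℝ) • k' = 0 := by
      funext i
      simp only [Pi.add_apply, Pi.smul_apply, smul_eq_mul, Pi.zero_apply]
      fin_cases i
      · exact e0
      · exact e1
      · exact e2
    have := (LinearIndependent.pair_iff.mp hind) s (-1) hc
    exact absurd this.2 (by norm_num)
  intro hcontra
  apply hvne
  refine ⟨?_, ?_, ?_⟩ <;> nlinarith [sq_nonneg (v 0), sq_nonneg (v 1), sq_nonneg (v 2)]

private lemma slab_measure (a R r : ℝ) (ha : 1 ≤ a) (hr0 : 0 < r) (hr1 : r ≤ 1) (hR : 0 ≤ R) :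
    volume {u : ℝ | |u| ≤ a * R ∧ ∃ n : ℤ, |u - 2*Real.pi*n| ≤ r}
      ≤ ENNReal.ofReal (10 * (R+1) * (a*r)) := by
  have hπ : (1:ℝ) < Real.pi := by linarith [Real.pi_gt_three]
  set Mn : ℕ := ⌈a * (R+1)⌉₊ with hMn
  have hsub : {u : ℝ | |u| ≤ a * R ∧ ∃ n : ℤ, |u - 2*Real.pi*n| ≤ r} ⊆
      ⋃ n ∈ Finset.Icc (-(Mn:ℤ)) (Mn:ℤ), Set.Icc (2*Real.pi*n - r) (2*Real.pi*n + r) := by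
    rintro u ⟨hu, n, hn⟩
    have habs : |2*Real.pi*(n:ℝ)| ≤ a*R + r := by
      calc |2*Real.pi*(n:ℝ)| = |(2*Real.pi*(n:ℝ) - u) + u| := by ring_nf
        _ ≤ |2*Real.pi*(n:ℝ) - u| + |u| := abs_add_le _ _
        _ = |u - 2*Real.pi*(n:ℝ)| + |u| := by rw [abs_sub_comm]
        _ ≤ r + (a*R) := add_le_add hn hu
        _ = a*R + r := by ring
    have hNabs : |(n:ℝ)| ≤ a * (R+1) := by
      have h1 : |2*Real.pi*(n:ℝ)| = 2*Real.pi*|(n:ℝ)| := by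
        rw [abs_mul, abs_of_nonneg (by linarith : (0:ℝ) ≤ 2*Real.pi)]
      nlinarith [abs_nonneg ((n:ℝ))]
    have hNM : |n| ≤ (Mn : ℤ) := by
      have h2 : |(n:ℝ)| ≤ (Mn:ℝ) := hNabs.trans (Nat.le_ceil _)
      exact_mod_cast (by rwa [← Int.cast_abs] at h2 : ((|n|:ℤ):ℝ) ≤ ((Mn:ℤ):ℝ))
    rw [abs_le] at hNM
    refine Set.mem_iUnion₂.mpr ⟨n, Finset.mem_Icc.mpr ⟨by linarith [hNM.1], hNM.2⟩, ?_⟩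
    rw [abs_le] at hn
    exact ⟨by linarith [hn.1], by linarith [hn.2]⟩
  calc volume {u : ℝ | |u| ≤ a * R ∧ ∃ n : ℤ, |u - 2*Real.pi*n| ≤ r}
      ≤ volume (⋃ n ∈ Finset.Icc (-(Mn:ℤ)) (Mn:ℤ),
          Set.Icc (2*Real.pi*(n:ℝ) - r) (2*Real.pi*n + r)) := measure_mono hsub
    _ ≤ ∑ n ∈ Finset.Icc (-(Mn:ℤ)) (Mn:ℤ),
          volume (Set.Icc (2*Real.pi*(n:ℝ) - r) (2*Real.pi*n + r)) :=
        measure_biUnion_finset_le _ _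
    _ = ∑ n ∈ Finset.Icc (-(Mn:ℤ)) (Mn:ℤ), ENNReal.ofReal (2*r) := by
        refine Finset.sum_congr rfl fun n _ => ?_
        rw [Real.volume_Icc]; congr 1; ring
    _ = ((2*Mn+1 : ℕ) : ℝ≥0∞) * ENNReal.ofReal (2*r) := by
        rw [Finset.sum_const, Int.card_Icc]
        have : ((Mn:ℤ) + 1 - -(Mn:ℤ)).toNat = 2*Mn+1 := by omega
        rw [this, nsmul_eq_mul]
    _ = ENNReal.ofReal (((2*Mn+1 : ℕ) : ℝ) * (2*r)) := by
        rw [← ENNReal.ofReal_natCast (2*Mn+1), ← ENNReal.ofReal_mul (by positivity)]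
    _ ≤ ENNReal.ofReal (10 * (R+1) * (a*r)) := by
        apply ENNReal.ofReal_le_ofReal
        have hceil : (Mn:ℝ) < a*(R+1) + 1 := Nat.ceil_lt_add_one (by positivity)
        have h1 : (1:ℝ) ≤ a*(R+1) := by nlinarith
        push_cast
        nlinarith [hceil, h1, hr0.le]

private lemma slab3_measure (k k' v : Fin 3 → ℝ) (hd : (Matrix.of ![k, k', v]).det ≠ 0) :
    ∃ Cs : ℝ, 0 < Cs ∧ ∀ a r : ℝ, 1 ≤ a → 0 < r → r ≤ 1 →
      (volume.restrict (Set.univ.pi fun _ : Fin 3 => Set.Ioc (-Real.pi) Real.pi))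
        {x : Fin 3 → ℝ | (∃ n : ℤ, |a * ∑ i, k i * x i - 2*Real.pi*n| ≤ r) ∧
                          (∃ n : ℤ, |a * ∑ i, k' i * x i - 2*Real.pi*n| ≤ r)}
        ≤ ENNReal.ofReal (Cs * r^2) := by
  have hπ : (1:ℝ) < Real.pi := by linarith [Real.pi_gt_three]
  set d : ℝ := (Matrix.of ![k, k', v]).det with hdd
  set Rk : ℝ := (∑ i, |k i|) * Real.pi with hRk
  set Rk' : ℝ := (∑ i, |k' i|) * Real.pi with hRk'
  set Rv : ℝ := (∑ i, |v i|) * Real.pi + 1 with hRv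
  have hRk0 : 0 ≤ Rk := by positivity
  have hRk'0 : 0 ≤ Rk' := by positivity
  have hRv0 : (0:ℝ) < Rv := by positivity
  refine ⟨|d|⁻¹ * (10 * (Rk+1)) * (10 * (Rk'+1)) * (2*Rv), by positivity, ?_⟩
  intro a r ha hr0 hr1
  have ha0 : (0:ℝ) < a := lt_of_lt_of_le one_pos ha
  set Ma : Matrix (Fin 3) (Fin 3) ℝ :=
    Matrix.of ![fun j => a * k j, fun j => a * k' j, v] with hMa
  have hdet : Ma.det = a^2 * d := by
    rw [hdd, hMa, Matrix.det_fin_three, Matrix.det_fin_three]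
    simp only [Matrix.of_apply, Matrix.cons_val', Matrix.cons_val_zero, Matrix.cons_val_one,
      Matrix.head_cons, Matrix.empty_val', Matrix.cons_val_fin_one, Matrix.head_fin_const,
      Matrix.cons_val_two, Matrix.tail_cons]
    ring
  set T : (Fin 3 → ℝ) →ₗ[ℝ] (Fin 3 → ℝ) := Matrix.toLin' Ma with hT
  have hdetT : LinearMap.det T = a^2 * d := by rw [hT, LinearMap.det_toLin', hdet]
  have hdetT0 : LinearMap.det T ≠ 0 := by
    rw [hdetT]; positivity
  set s : Fin 3 → Set ℝ := ![
      {u : ℝ | |u| ≤ a * Rk ∧ ∃ n : ℤ, |u - 2*Real.pi*n| ≤ r},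
      {u : ℝ | |u| ≤ a * Rk' ∧ ∃ n : ℤ, |u - 2*Real.pi*n| ≤ r},
      Set.Icc (-Rv) Rv] with hs
  set box : Set (Fin 3 → ℝ) := Set.univ.pi fun _ : Fin 3 => Set.Ioc (-Real.pi) Real.pi with hbox
  set S : Set (Fin 3 → ℝ) := {x : Fin 3 → ℝ |
      (∃ n : ℤ, |a * ∑ i, k i * x i - 2*Real.pi*n| ≤ r) ∧
      (∃ n : ℤ, |a * ∑ i, k' i * x i - 2*Real.pi*n| ≤ r)} with hS
  have hsub : S ∩ box ⊆ T ⁻¹' (Set.univ.pi s) := by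
    rintro x ⟨hxS, hxB⟩
    have hxb : ∀ j, |x j| ≤ Real.pi := by
      intro j
      have := hxB j (Set.mem_univ j)
      rw [abs_le]
      exact ⟨le_of_lt this.1, this.2⟩
    have hdot : ∀ w : Fin 3 → ℝ, |∑ i, w i * x i| ≤ (∑ i, |w i|) * Real.pi := by
      intro w
      calc |∑ i, w i * x i| ≤ ∑ i, |w i * x i| := Finset.abs_sum_le_sum_abs _ _
        _ ≤ ∑ i, |w i| * Real.pi := by
            refine Finset.sum_le_sum fun i _ => ?_
            rw [abs_mul]
            exact mul_le_mul_of_nonneg_left (hxb i) (abs_nonneg _)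
        _ = (∑ i, |w i|) * Real.pi := by rw [Finset.sum_mul]
    have hTx : ∀ i, T x i = ∑ j, Ma i j * x j := by
      intro i
      rw [hT, Matrix.toLin'_apply]
      rfl
    intro i _
    fin_cases i
    · have h0 : T x 0 = a * ∑ j, k j * x j := by
        rw [hTx 0, Finset.mul_sum]
        refine Finset.sum_congr rfl fun j _ => ?_
        simp only [hMa, Matrix.of_apply, Matrix.cons_val_zero]
        ring
      show T x 0 ∈ s 0
      simp only [hs, Matrix.cons_val_zero, Set.mem_setOf_eq]
      constructor
      · rw [h0, abs_mul, abs_of_pos ha0, hRk]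
        exact mul_le_mul_of_nonneg_left (hdot k) ha0.le
      · obtain ⟨n, hn⟩ := hxS.1
        exact ⟨n, by rwa [h0]⟩
    · have h0 : T x 1 = a * ∑ j, k' j * x j := by
        rw [hTx 1, Finset.mul_sum]
        refine Finset.sum_congr rfl fun j _ => ?_
        simp only [hMa, Matrix.of_apply, Matrix.cons_val_one, Matrix.head_cons, Matrix.cons_val_zero]
        ring
      show T x 1 ∈ s 1
      simp only [hs, Matrix.cons_val_one, Matrix.head_cons, Set.mem_setOf_eq]
      constructor
      · rw [h0, abs_mul, abs_of_pos ha0, hRk']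
        exact mul_le_mul_of_nonneg_left (hdot k') ha0.le
      · obtain ⟨n, hn⟩ := hxS.2
        exact ⟨n, by rwa [h0]⟩
    · have h0 : T x 2 = ∑ j, v j * x j := by
        rw [hTx 2]
        refine Finset.sum_congr rfl fun j _ => ?_
        simp only [hMa, Matrix.of_apply, Matrix.cons_val_two, Matrix.tail_cons,
          Matrix.head_cons]
      show T x 2 ∈ s 2
      simp only [hs, Matrix.cons_val_two, Matrix.tail_cons, Matrix.head_cons]
      rw [Set.mem_Icc, ← abs_le]
      rw [h0]
      calc |∑ j, v j * x j| ≤ (∑ i, |v i|) * Real.pi := hdot v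
        _ ≤ Rv := by rw [hRv]; linarith
  have hboxm : MeasurableSet box :=
    MeasurableSet.univ_pi fun _ => measurableSet_Ioc
  rw [Measure.restrict_apply' hboxm]
  calc volume (S ∩ box) ≤ volume (T ⁻¹' (Set.univ.pi s)) := measure_mono hsub
    _ = ENNReal.ofReal |(LinearMap.det T)⁻¹| * volume (Set.univ.pi s) :=
        Measure.addHaar_preimage_linearMap volume hdetT0 _
    _ ≤ ENNReal.ofReal |(LinearMap.det T)⁻¹| *
        (ENNReal.ofReal (10 * (Rk+1) * (a*r)) * ENNReal.ofReal (10 * (Rk'+1) * (a*r)) *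
          ENNReal.ofReal (2*Rv)) := by
        gcongr
        rw [volume_pi_pi, Fin.prod_univ_three]
        have e0 : s 0 = {u : ℝ | |u| ≤ a * Rk ∧ ∃ n : ℤ, |u - 2*Real.pi*n| ≤ r} := rfl
        have e1 : s 1 = {u : ℝ | |u| ≤ a * Rk' ∧ ∃ n : ℤ, |u - 2*Real.pi*n| ≤ r} := rfl
        have e2 : s 2 = Set.Icc (-Rv) Rv := rfl
        have hv2 : volume (s 2) = ENNReal.ofReal (2*Rv) := by
          rw [e2, Real.volume_Icc]
          congr 1
          ring
        rw [e0, e1, hv2]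
        exact mul_le_mul' (mul_le_mul' (slab_measure a Rk r ha hr0 hr1 hRk0)
          (slab_measure a Rk' r ha hr0 hr1 hRk'0)) le_rfl
    _ ≤ ENNReal.ofReal (|d|⁻¹ * (10 * (Rk+1)) * (10 * (Rk'+1)) * (2*Rv) * r^2) := by
        rw [← ENNReal.ofReal_mul (by positivity), ← ENNReal.ofReal_mul (by positivity),
          ← ENNReal.ofReal_mul (by positivity)]
        apply ENNReal.ofReal_le_ofReal
        rw [hdetT]
        have habs : |(a^2*d)⁻¹| = (a^2)⁻¹ * |d|⁻¹ := by
          rw [abs_inv, abs_mul, mul_inv, abs_of_pos (by positivity : (0:ℝ) < a^2)]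
        rw [habs]
        apply le_of_eq
        have : (a^2)⁻¹ * |d|⁻¹ * (10 * (Rk+1) * (a*r) * (10 * (Rk'+1) * (a*r)) * (2*Rv))
            = |d|⁻¹ * (10 * (Rk+1)) * (10 * (Rk'+1)) * (2*Rv) * r^2 * (a^2 * (a^2)⁻¹) := by
          ring
        rw [this, mul_inv_cancel₀ (by positivity : (a:ℝ)^2 ≠ 0), mul_one]

private noncomputable def dotCLM (c : ℝ) (w : Fin 3 → ℝ) : (Fin 3 → ℝ) →L[ℝ] ℝ :=
  LinearMap.toContinuousLinearMap
    { toFun := fun x => c * ∑ i, w i * x i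
      map_add' := by
        intro x y
        simp only [Pi.add_apply, mul_add, Finset.sum_add_distrib]
      map_smul' := by
        intro m x
        simp only [Pi.smul_apply, smul_eq_mul, RingHom.id_apply]
        rw [show (∑ i, w i * (m * x i)) = m * ∑ i, w i * x i from by
          rw [Finset.mul_sum]; exact Finset.sum_congr rfl fun i _ => by ring]
        ring }

private lemma dotCLM_apply (c : ℝ) (w : Fin 3 → ℝ) (x : Fin 3 → ℝ) :
    dotCLM c w x = c * ∑ i, w i * x i := rfl

private lemma dotCLM_norm (c : ℝ) (w : Fin 3 → ℝ) :
    ‖dotCLM c w‖ ≤ |c| * ∑ i, |w i| := by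
  apply ContinuousLinearMap.opNorm_le_bound _ (by positivity)
  intro x
  rw [dotCLM_apply]
  calc ‖c * ∑ i, w i * x i‖ = |c| * |∑ i, w i * x i| := by
        rw [Real.norm_eq_abs, abs_mul]
    _ ≤ |c| * ((∑ i, |w i|) * ‖x‖) := by
        gcongr
        calc |∑ i, w i * x i| ≤ ∑ i, |w i * x i| := Finset.abs_sum_le_sum_abs _ _
          _ ≤ ∑ i, |w i| * ‖x‖ := by
              refine Finset.sum_le_sum fun i _ => ?_
              rw [abs_mul]
              exact mul_le_mul_of_nonneg_left (norm_le_pi_norm x i) (abs_nonneg _)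
          _ = (∑ i, |w i|) * ‖x‖ := by rw [Finset.sum_mul]
    _ = (|c| * ∑ i, |w i|) * ‖x‖ := by ring

/-- The measure of the torus `𝕋³ = [-π,π]³`. -/
noncomputable def torusMeasure3 : Measure (Fin 3 → ℝ) :=
  volume.restrict (Set.univ.pi fun _ : Fin 3 => Set.Ioc (-Real.pi) Real.pi)

set_option maxHeartbeats 2000000 in
/-- Product estimate for intermittent shear flows oscillating in distinct (non-parallel)
rational directions `k ≠ k'`: with `φ_{(k)}(x) = φ_{r_⊥}(λ r_⊥ N_Λ k·x)` built from a
smooth bump `φ` supported in `[-1,1]` via `φ_{r_⊥}(y) = r_⊥^{-1/2} φ(y/r_⊥)`,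
`‖∇^N (φ_{(k)} φ_{(k')})‖_{L^p(𝕋³)} ≲ λ^N r_⊥^{2/p - 1}`,
with constant independent of `r_⊥` and `λ`. -/
theorem stmt10 (φ : ℝ → ℝ) (hφ : ContDiff ℝ (⊤ : ℕ∞) φ)
    (hsupp : tsupport φ ⊆ Set.Icc (-1) 1)
    (p : ENNReal) (hp : 1 ≤ p) (N : ℕ) (NΛ : ℕ+)
    (k k' : Fin 3 → ℝ) (hk : ∑ i, k i ^ 2 = 1) (hk' : ∑ i, k' i ^ 2 = 1)
    (hkZ : ∀ i, ∃ z : ℤ, ((NΛ : ℕ) : ℝ) * k i = (z : ℝ))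
    (hk'Z : ∀ i, ∃ z : ℤ, ((NΛ : ℕ) : ℝ) * k' i = (z : ℝ))
    (hne : k ≠ k') (hind : LinearIndependent ℝ ![k, k']) :
    ∃ C : ℝ, 0 < C ∧
      ∀ r lam : ℝ, 0 < r → r < 1 → 1 ≤ lam →
        (∃ m : ℕ, 0 < m ∧ lam * r = (m : ℝ)) →
        ∀ φper : ℝ → ℝ, ContDiff ℝ (⊤ : ℕ∞) φper →
          Function.Periodic φper (2 * Real.pi) →
          (∀ y ∈ Set.Ico (-Real.pi) Real.pi,
            φper y = (Real.sqrt r)⁻¹ * φ (y / r)) →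
          eLpNorm
              (fun x : Fin 3 → ℝ => ‖iteratedFDeriv ℝ N
                (fun y : Fin 3 → ℝ =>
                  φper (lam * r * ((NΛ : ℕ) : ℝ) * ∑ i, k i * y i) *
                    φper (lam * r * ((NΛ : ℕ) : ℝ) * ∑ i, k' i * y i)) x‖)
              p torusMeasure3
            ≤ ENNReal.ofReal (C * lam ^ N * r ^ (2 / p.toReal - 1)) := by
  classical
  have hπ : (1:ℝ) < Real.pi := by linarith [Real.pi_gt_three]
  -- uniform bound on derivatives of φ up to order N
  have hφc : HasCompactSupport φ :=
    HasCompactSupport.intro isCompact_Icc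
      (fun x hx => image_eq_zero_of_notMem_tsupport (fun h => hx (hsupp h)))
  have hMex : ∀ i : ℕ, ∃ Mi : ℝ, ∀ t, |iteratedDeriv i φ t| ≤ Mi := by
    intro i
    have hcont : Continuous (iteratedDeriv i φ) := hφ.continuous_iteratedDeriv i (by exact_mod_cast le_top)
    have hsub2 : Function.support (iteratedDeriv i φ) ⊆ tsupport φ := by
      intro x hx
      rw [Function.mem_support] at hx
      refine support_iteratedFDeriv_subset (𝕜 := ℝ) i ?_
      rw [Function.mem_support]
      intro hzero
      exact hx (by rw [iteratedDeriv_eq_iteratedFDeriv, hzero]; simp)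
    have hcs : HasCompactSupport (iteratedDeriv i φ) :=
      IsCompact.of_isClosed_subset hφc isClosed_closure
        (closure_minimal hsub2 isClosed_closure)
    obtain ⟨Mi, hMi⟩ :=
      Continuous.bounded_above_of_compact_support hcont.abs
        (hcs.comp_left (g := abs) abs_zero)
    exact ⟨Mi, fun t => by simpa [Real.norm_eq_abs, abs_abs] using hMi t⟩
  choose Mi hMi using hMex
  set M : ℝ := 1 + ∑ i ∈ Finset.range (N+1), |Mi i| with hMdef
  have hMsum : (0:ℝ) ≤ ∑ i ∈ Finset.range (N+1), |Mi i| :=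
    Finset.sum_nonneg fun i _ => abs_nonneg _
  have hM1 : (1:ℝ) ≤ M := by rw [hMdef]; linarith
  have hM0 : (0:ℝ) ≤ M := by linarith
  have hMb : ∀ i, i ≤ N → ∀ t, |iteratedDeriv i φ t| ≤ M := by
    intro i hi t
    have h3 : |Mi i| ≤ ∑ j ∈ Finset.range (N+1), |Mi j| :=
      Finset.single_le_sum (fun j _ => abs_nonneg (Mi j))
        (Finset.mem_range.mpr (Nat.lt_succ_of_le hi))
    have := hMi i t
    have := le_abs_self (Mi i)
    rw [hMdef]
    linarith
  clear_value M
  -- constants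
  set K : ℝ := max (∑ i, |k i|) (∑ i, |k' i|) + 1 with hKdef
  have hCk0 : 0 ≤ ∑ i, |k i| := Finset.sum_nonneg fun i _ => abs_nonneg _
  have hCk'0 : 0 ≤ ∑ i, |k' i| := Finset.sum_nonneg fun i _ => abs_nonneg _
  have hK0 : (0:ℝ) < K := by
    rw [hKdef]
    have := le_max_left (∑ i, |k i|) (∑ i, |k' i|)
    linarith
  have hCkK : (∑ i, |k i|) ≤ K := by
    rw [hKdef]; have := le_max_left (∑ i, |k i|) (∑ i, |k' i|); linarith
  have hCk'K : (∑ i, |k' i|) ≤ K := by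
    rw [hKdef]; have := le_max_right (∑ i, |k i|) (∑ i, |k' i|); linarith
  clear_value K
  obtain ⟨v, hd⟩ := exists_good_v k k' hk hind
  obtain ⟨Cs, hCs0, hCs⟩ := slab3_measure k k' v hd
  set C₀ : ℝ := 2^N * (((NΛ : ℕ) : ℝ) * K)^N * M^2 with hC₀def
  have hNΛ1 : (1:ℝ) ≤ ((NΛ : ℕ) : ℝ) := by exact_mod_cast NΛ.one_le
  have hNΛ0 : (0:ℝ) < ((NΛ : ℕ) : ℝ) := lt_of_lt_of_le one_pos hNΛ1
  have hC₀0 : 0 < C₀ := by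
    rw [hC₀def]
    have hMpos : (0:ℝ) < M := lt_of_lt_of_le one_pos hM1
    positivity
  clear_value C₀
  refine ⟨C₀ * max Cs 1, by positivity, ?_⟩
  intro r lam hr0 hr1 hlam hm φper hφper hper hform
  obtain ⟨m, hm0, hmr⟩ := hm
  have hlam0 : (0:ℝ) < lam := lt_of_lt_of_le one_pos hlam
  set a : ℝ := lam * r * ((NΛ : ℕ) : ℝ) with ha
  have ha1 : (1:ℝ) ≤ a := by
    rw [ha, hmr]
    have h1 : (1:ℝ) ≤ (m:ℝ) := by exact_mod_cast hm0
    nlinarith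
  have ha0 : (0:ℝ) < a := lt_of_lt_of_le one_pos ha1
  clear_value a
  set L₁ := dotCLM a k with hL₁
  set L₂ := dotCLM a k' with hL₂
  set G : (Fin 3 → ℝ) → ℝ :=
    fun y => φper (a * ∑ i, k i * y i) * φper (a * ∑ i, k' i * y i) with hG
  have hGf : G = fun y => (φper ∘ ⇑L₁) y * (φper ∘ ⇑L₂) y := rfl
  have hf₁ : ContDiff ℝ (⊤ : ℕ∞) (φper ∘ ⇑L₁) := hφper.comp L₁.contDiff
  have hf₂ : ContDiff ℝ (⊤ : ℕ∞) (φper ∘ ⇑L₂) := hφper.comp L₂.contDiff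
  -- per-factor derivative bound
  have hfac : ∀ (w : Fin 3 → ℝ), (∑ i, |w i|) ≤ K → ∀ i, i ≤ N → ∀ x : Fin 3 → ℝ,
      ‖iteratedFDeriv ℝ i (φper ∘ ⇑(dotCLM a w)) x‖ ≤
        (Real.sqrt r)⁻¹ * M * (lam * ((NΛ : ℕ) : ℝ) * K) ^ i := by
    intro w hw i hi x
    have h1 : ‖iteratedFDeriv ℝ i (φper ∘ ⇑(dotCLM a w)) x‖ ≤
        ‖iteratedFDeriv ℝ i φper (dotCLM a w x)‖ * ‖dotCLM a w‖ ^ i := by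
      rw [ContinuousLinearMap.iteratedFDeriv_comp_right (dotCLM a w) hφper x (by exact_mod_cast le_top)]
      refine (ContinuousMultilinearMap.norm_compContinuousLinearMap_le _ _).trans ?_
      simp [Finset.prod_const]
    have h2 : ‖iteratedFDeriv ℝ i φper (dotCLM a w x)‖ ≤ (Real.sqrt r)⁻¹ * r⁻¹ ^ i * M := by
      rw [norm_iteratedFDeriv_eq_norm_iteratedDeriv, Real.norm_eq_abs]
      exact per_deriv_bound φ φper hφ hsupp r hr0 hr1 hφper hper hform i M hM0 (hMb i hi) _
    have h3 : ‖dotCLM a w‖ ≤ a * K := by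
      refine (dotCLM_norm a w).trans ?_
      rw [abs_of_pos ha0]
      exact mul_le_mul_of_nonneg_left hw ha0.le
    have hpow : ‖dotCLM a w‖ ^ i ≤ (a*K) ^ i := pow_le_pow_left₀ (norm_nonneg _) h3 i
    calc ‖iteratedFDeriv ℝ i (φper ∘ ⇑(dotCLM a w)) x‖
        ≤ ((Real.sqrt r)⁻¹ * r⁻¹ ^ i * M) * (a*K) ^ i := by
          refine h1.trans ?_
          refine mul_le_mul h2 hpow (pow_nonneg (norm_nonneg _) i) ?_
          have : (0:ℝ) ≤ (Real.sqrt r)⁻¹ * r⁻¹ ^ i := by positivity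
          exact mul_nonneg this hM0
      _ = (Real.sqrt r)⁻¹ * M * (lam * ((NΛ : ℕ) : ℝ) * K) ^ i := by
          have haK : r⁻¹ * (a * K) = lam * ((NΛ : ℕ) : ℝ) * K := by
            rw [ha]; field_simp
          rw [← haK, mul_pow, inv_pow]
          ring
  -- supremum bound
  set B : ℝ := C₀ * lam ^ N * r⁻¹ with hB
  have hB0 : (0:ℝ) ≤ B := by
    rw [hB]
    exact mul_nonneg (mul_nonneg hC₀0.le (pow_nonneg hlam0.le N)) (inv_nonneg.mpr hr0.le)
  clear_value B
  have hsup : ∀ x, ‖iteratedFDeriv ℝ N G x‖ ≤ B := by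
    intro x
    rw [hGf]
    refine (norm_iteratedFDeriv_mul_le hf₁ hf₂ x (by exact_mod_cast le_top)).trans ?_
    set Q : ℝ := lam * ((NΛ : ℕ) : ℝ) * K with hQ
    have hQ0 : (0:ℝ) < Q := by rw [hQ]; positivity
    clear_value Q
    have hbd : ∀ i ∈ Finset.range (N+1),
        (N.choose i : ℝ) * ‖iteratedFDeriv ℝ i (φper ∘ ⇑L₁) x‖ *
          ‖iteratedFDeriv ℝ (N-i) (φper ∘ ⇑L₂) x‖ ≤
        (N.choose i : ℝ) * (r⁻¹ * M^2 * Q^N) := by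
      intro i hi
      rw [Finset.mem_range] at hi
      have hiN : i ≤ N := Nat.lt_succ_iff.mp hi
      have e1 := hfac k hCkK i hiN x
      have e2 := hfac k' hCk'K (N-i) (Nat.sub_le N i) x
      have hprod : ((Real.sqrt r)⁻¹ * M * Q^i) * ((Real.sqrt r)⁻¹ * M * Q^(N-i))
          = r⁻¹ * M^2 * Q^N := by
        have hsq : (Real.sqrt r)⁻¹ * (Real.sqrt r)⁻¹ = r⁻¹ := by
          rw [← mul_inv, Real.mul_self_sqrt hr0.le]
        have hQp : Q^i * Q^(N-i) = Q^N := by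
          rw [← pow_add, Nat.add_sub_cancel' hiN]
        calc ((Real.sqrt r)⁻¹ * M * Q^i) * ((Real.sqrt r)⁻¹ * M * Q^(N-i))
            = ((Real.sqrt r)⁻¹ * (Real.sqrt r)⁻¹) * (M * M) * (Q^i * Q^(N-i)) := by ring
          _ = r⁻¹ * M^2 * Q^N := by rw [hsq, hQp]; ring
      have hmm : ‖iteratedFDeriv ℝ i (φper ∘ ⇑L₁) x‖ * ‖iteratedFDeriv ℝ (N-i) (φper ∘ ⇑L₂) x‖
          ≤ r⁻¹ * M^2 * Q^N := by
        rw [← hprod]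
        refine mul_le_mul e1 e2 (norm_nonneg _) ?_
        have h0 : (0:ℝ) ≤ (Real.sqrt r)⁻¹ * M := mul_nonneg (by positivity) hM0
        exact mul_nonneg h0 (pow_nonneg hQ0.le _)
      calc (N.choose i : ℝ) * ‖iteratedFDeriv ℝ i (φper ∘ ⇑L₁) x‖ *
            ‖iteratedFDeriv ℝ (N-i) (φper ∘ ⇑L₂) x‖
          = (N.choose i : ℝ) * (‖iteratedFDeriv ℝ i (φper ∘ ⇑L₁) x‖ *
            ‖iteratedFDeriv ℝ (N-i) (φper ∘ ⇑L₂) x‖) := by ring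
        _ ≤ (N.choose i : ℝ) * (r⁻¹ * M^2 * Q^N) :=
            mul_le_mul_of_nonneg_left hmm (Nat.cast_nonneg _)
    refine (Finset.sum_le_sum hbd).trans ?_
    rw [← Finset.sum_mul]
    apply le_of_eq
    rw [← Nat.cast_sum, Nat.sum_range_choose, hB, hC₀def, hQ]
    push_cast
    ring
  -- vanishing off the slab set
  set S : Set (Fin 3 → ℝ) := {x : Fin 3 → ℝ |
      (∃ n : ℤ, |a * ∑ i, k i * x i - 2*Real.pi*n| ≤ r) ∧
      (∃ n : ℤ, |a * ∑ i, k' i * x i - 2*Real.pi*n| ≤ r)} with hS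
  have key : ∀ (w : Fin 3 → ℝ) (x : Fin 3 → ℝ),
      (∀ n : ℤ, ¬ |a * ∑ i, w i * x i - 2*Real.pi*n| ≤ r) →
      ∀ᶠ y in nhds x, φper (a * ∑ i, w i * y i) = 0 := by
    intro w x hw
    set z : ℝ := a * ∑ i, w i * x i with hz
    clear_value z
    obtain ⟨n, hn1, hn2⟩ : ∃ n : ℤ, 2*Real.pi*n + r < z ∧ z < 2*Real.pi*n + 2*Real.pi - r := by
      obtain ⟨n₀, hA, hB'⟩ : ∃ n₀ : ℤ, 2*Real.pi*n₀ ≤ z ∧ z < 2*Real.pi*n₀ + 2*Real.pi := by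
        refine ⟨⌊z / (2*Real.pi)⌋, ?_, ?_⟩
        · have h1 : (⌊z / (2*Real.pi)⌋ : ℝ) ≤ z / (2*Real.pi) := Int.floor_le _
          have := (le_div_iff₀ (by linarith : (0:ℝ) < 2*Real.pi)).mp h1
          linarith
        · have h2 : z / (2*Real.pi) < ⌊z / (2*Real.pi)⌋ + 1 := Int.lt_floor_add_one _
          have := (div_lt_iff₀ (by linarith : (0:ℝ) < 2*Real.pi)).mp h2
          nlinarith
      have h1 := hw n₀
      have h2 := hw (n₀+1)
      rw [not_le] at h1 h2
      refine ⟨n₀, ?_, ?_⟩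
      · have : r < z - 2*Real.pi*n₀ := by
          rwa [abs_of_nonneg (by linarith)] at h1
        linarith
      · have hle : z - 2*Real.pi*(n₀+1) ≤ 0 := by push_cast; linarith
        have : r < -(z - 2*Real.pi*((n₀:ℝ)+1)) := by
          have := h2
          rw [abs_of_nonpos (by push_cast at hle ⊢; linarith)] at this
          push_cast at this ⊢
          linarith
        push_cast at this
        linarith
    have hopen : IsOpen {y : Fin 3 → ℝ |
        2*Real.pi*n + r < a * ∑ i, w i * y i ∧
        a * ∑ i, w i * y i < 2*Real.pi*n + 2*Real.pi - r} := by
      have heq : {y : Fin 3 → ℝ |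
          2*Real.pi*n + r < a * ∑ i, w i * y i ∧
          a * ∑ i, w i * y i < 2*Real.pi*n + 2*Real.pi - r} =
          ⇑(dotCLM a w) ⁻¹' (Set.Ioo (2*Real.pi*n + r) (2*Real.pi*n + 2*Real.pi - r)) := rfl
      rw [heq]
      exact isOpen_Ioo.preimage (dotCLM a w).continuous
    rw [hz] at hn1 hn2
    filter_upwards [hopen.mem_nhds ⟨hn1, hn2⟩] with y hy
    exact per_vanish φ φper hsupp r hr0 hr1 hper hform n _ hy.1 hy.2
  have hvanish : ∀ x, x ∉ S → iteratedFDeriv ℝ N G x = 0 := by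
    intro x hx
    rw [hS, Set.mem_setOf_eq, not_and_or] at hx
    have hev : ∀ᶠ y in nhds x, G y = 0 := by
      rcases hx with hx | hx
      · rw [not_exists] at hx
        filter_upwards [key k x hx] with y hy
        rw [hG]
        simp only [hy, zero_mul]
      · rw [not_exists] at hx
        filter_upwards [key k' x hx] with y hy
        rw [hG]
        simp only [hy, mul_zero]
    rw [ev_iteratedFDeriv_eq N hev, iteratedFDeriv_zero_fun]
    rfl
  -- exponent facts
  have hpt : p.toReal = 0 ∨ 1 ≤ p.toReal := by
    by_cases hptop : p = ⊤
    · left; simp [hptop]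
    · right
      rw [show (1:ℝ) = (1:ENNReal).toReal from by simp]
      exact ENNReal.toReal_mono hptop hp
  have hipt0 : 0 ≤ 1 / p.toReal := by
    rcases hpt with h | h
    · simp [h]
    · positivity
  have hipt1 : 1 / p.toReal ≤ 1 := by
    rcases hpt with h | h
    · simp [h]
    · rw [div_le_one (by linarith)]; linarith
  -- main chain
  calc eLpNorm (fun x : Fin 3 → ℝ => ‖iteratedFDeriv ℝ N G x‖) p torusMeasure3
      ≤ eLpNorm (S.indicator fun _ => B) p torusMeasure3 := by
        apply eLpNorm_mono
        intro x
        rw [norm_norm]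
        by_cases hx : x ∈ S
        · rw [Set.indicator_of_mem hx, Real.norm_eq_abs, abs_of_nonneg hB0]
          exact hsup x
        · rw [hvanish x hx]
          simp
    _ ≤ ‖B‖ₑ * (torusMeasure3 S) ^ (1/p.toReal) := eLpNorm_indicator_const_le _ _
    _ ≤ ENNReal.ofReal B * (ENNReal.ofReal (Cs * r^2)) ^ (1/p.toReal) := by
        gcongr
        · exact le_of_eq (Real.enorm_eq_ofReal hB0)
        · have hmeas := hCs a r ha1 hr0 hr1.le
          rw [torusMeasure3, hS]
          exact hmeas
    _ ≤ ENNReal.ofReal (C₀ * max Cs 1 * lam^N * r ^ (2/p.toReal - 1)) := by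
        rw [ENNReal.ofReal_rpow_of_pos (by positivity), ← ENNReal.ofReal_mul hB0]
        apply ENNReal.ofReal_le_ofReal
        have key1 : (Cs * r^2) ^ (1/p.toReal) ≤ max Cs 1 * r^(2/p.toReal) := by
          rw [Real.mul_rpow hCs0.le (by positivity)]
          have hA : Cs ^ (1/p.toReal) ≤ max Cs 1 := by
            rcases le_or_gt Cs 1 with h | h
            · exact (Real.rpow_le_one hCs0.le h hipt0).trans (le_max_right _ _)
            · calc Cs ^ (1/p.toReal) ≤ Cs ^ (1:ℝ) :=
                    Real.rpow_le_rpow_of_exponent_le h.le hipt1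
                _ = Cs := Real.rpow_one _
                _ ≤ max Cs 1 := le_max_left _ _
          have hB2 : ((r^2 : ℝ)) ^ (1/p.toReal) = r ^ (2/p.toReal) := by
            rw [← Real.rpow_natCast r 2, ← Real.rpow_mul hr0.le]
            congr 1
            push_cast
            ring
          rw [hB2]
          exact mul_le_mul_of_nonneg_right hA (Real.rpow_nonneg hr0.le _)
        calc B * (Cs * r^2) ^ (1/p.toReal)
            ≤ B * (max Cs 1 * r^(2/p.toReal)) := mul_le_mul_of_nonneg_left key1 hB0
          _ = C₀ * max Cs 1 * lam^N * r ^ (2/p.toReal - 1) := by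
              rw [hB]
              have hrr : r ^ (2/p.toReal - 1) = r^(2/p.toReal) * r⁻¹ := by
                rw [show 2/p.toReal - 1 = 2/p.toReal + (-1) from by ring,
                  Real.rpow_add hr0, Real.rpow_neg_one]
              rw [hrr]
              ring
end
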